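/- arXiv:2005.12025 — 7 statements merged into one kernel-verified Lean document; each statement's English description precedes it below -/
import Mathlib

section
/- Assume Γ has at least one pair of distinct non-adjacent vertices, λ − μ − 2s > 0, and s < −1. Then for every nonempty W ⊆ V, the diameter of P(W) is strictly smaller than the diameter of P(V) if and only if W is a clique in Γ (a set of pairwise adjacent vertices). -/
open scoped RealInnerProductSpace

/-- The `i`-th column of `y = A - s·I`, where `A` is the real adjacency matrix of `G`,
viewed as a point of Euclidean space `ℝ^V`. -/
noncomputable def srgCol {V : Type*} [Fintype V] [DecidableEq V]
    (G : SimpleGraph V) [DecidableRel G.Adj] (s : ℝ) (i : V) : EuclideanSpace ℝ V :=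
  (WithLp.equiv 2 (V → ℝ)).symm fun j => (G.adjMatrix ℝ - s • (1 : Matrix V V ℝ)) j i

theorem stmt_5 {V : Type*} [Fintype V] [DecidableEq V]
    (G : SimpleGraph V) [DecidableRel G.Adj] (v k l m : ℕ)
    (hG : G.IsSRGWith v k l m)
    (hnonadj : ∃ i j : V, i ≠ j ∧ ¬G.Adj i j)
    (s : ℝ) (hsl : (l : ℝ) - m - 2 * s > 0) (hs : s < -1)
    (W : Set V) (hW : W.Nonempty) :
    Metric.diam (srgCol G s '' W) < Metric.diam (Set.range (srgCol G s)) ↔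
      G.IsClique W := by
  classical
  set c := srgCol G s with hc
  set B := G.adjMatrix ℝ - s • (1 : Matrix V V ℝ) with hB
  have hBsymm : ∀ a b : V, B a b = B b a := by
    intro a b
    by_cases h : a = b
    · subst h; rfl
    · simp only [hB, Matrix.sub_apply, Matrix.smul_apply, SimpleGraph.adjMatrix_apply,
        Matrix.one_apply, if_neg h, if_neg (Ne.symm h), G.adj_comm a b]
  -- dist squared formula in terms of entries of B*B
  have key : ∀ i j : V, dist (c i) (c j) ^ 2
      = (B * B) i i + (B * B) j j - 2 * ((B * B) i j) := by
    intro i j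
    have happ : ∀ (a t : V), c a t = B t a := fun a t => rfl
    rw [EuclideanSpace.dist_eq]
    rw [Real.sq_sqrt (by positivity : (0:ℝ) ≤ ∑ t, dist (c i t) (c j t) ^ 2)]
    have h1 : ∀ t : V, dist (c i t) (c j t) ^ 2
        = B t i * B t i + B t j * B t j - 2 * (B t i * B t j) := by
      intro t
      rw [happ, happ, Real.dist_eq, sq_abs]
      ring
    have hmul : ∀ a b : V, (B * B) a b = ∑ t, B t a * B t b := by
      intro a b
      rw [Matrix.mul_apply]
      exact Finset.sum_congr rfl fun t _ => by rw [hBsymm a t]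
    rw [Finset.sum_congr rfl fun t _ => h1 t, Finset.sum_sub_distrib,
      Finset.sum_add_distrib, ← Finset.mul_sum, hmul i i, hmul j j, hmul i j]
  -- entries of B*B
  have hBB : B * B = G.adjMatrix ℝ ^ 2 - (2 * s) • G.adjMatrix ℝ
      + (s ^ 2) • (1 : Matrix V V ℝ) := by
    rw [hB, sq]
    simp only [Matrix.sub_mul, Matrix.mul_sub, Matrix.smul_mul, Matrix.mul_smul,
      Matrix.one_mul, Matrix.mul_one, smul_smul]
    module
  have hentry : ∀ i j : V, (B * B) i j
      = (k : ℝ) * (if i = j then 1 else 0)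
        + (l : ℝ) * (if G.Adj i j then 1 else 0)
        + (m : ℝ) * (if i ≠ j ∧ ¬ G.Adj i j then 1 else 0)
        - 2 * s * (if G.Adj i j then 1 else 0)
        + s ^ 2 * (if i = j then 1 else 0) := by
    intro i j
    rw [hBB, hG.matrix_eq (α := ℝ)]
    simp only [Matrix.add_apply, Matrix.sub_apply, Matrix.smul_apply]
    simp only [Matrix.one_apply, SimpleGraph.adjMatrix_apply, SimpleGraph.compl_adj,
      smul_eq_mul, nsmul_eq_mul]
  have hselfsq : ∀ i : V, (B * B) i i = (k : ℝ) + s ^ 2 := by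
    intro i
    rw [hentry]
    simp [G.irrefl]
  have hdadj : ∀ i j : V, G.Adj i j →
      dist (c i) (c j) ^ 2 = 2 * ((k : ℝ) + s ^ 2) - 2 * ((l : ℝ) - 2 * s) := by
    intro i j ha
    rw [key, hselfsq, hselfsq, hentry]
    simp [ha, ha.ne]
    ring
  have hdnon : ∀ i j : V, i ≠ j → ¬ G.Adj i j →
      dist (c i) (c j) ^ 2 = 2 * ((k : ℝ) + s ^ 2) - 2 * (m : ℝ) := by
    intro i j hij ha
    rw [key, hselfsq, hselfsq, hentry]
    simp [ha, hij]
    ring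
  set En : ℝ := 2 * ((k : ℝ) + s ^ 2) - 2 * (m : ℝ) with hEn
  set Ea : ℝ := 2 * ((k : ℝ) + s ^ 2) - 2 * ((l : ℝ) - 2 * s) with hEa
  have hmk : (m : ℝ) ≤ (k : ℝ) := by
    obtain ⟨i0, j0, hij0, hna0⟩ := hnonadj
    have h1 := hG.of_not_adj hij0 hna0
    have h2 := G.card_commonNeighbors_le_degree_left i0 j0
    have h3 := hG.regular i0
    rw [h1, h3] at h2
    exact_mod_cast h2
  have hEnpos : 0 < En := by nlinarith [sq_nonneg s]
  set dn : ℝ := Real.sqrt En with hdn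
  have hdnpos : 0 < dn := Real.sqrt_pos.mpr hEnpos
  have hdnsq : dn ^ 2 = En := Real.sq_sqrt hEnpos.le
  have hEaEn : Ea < En := by rw [hEa, hEn]; nlinarith
  -- distances
  have hdist_non : ∀ i j : V, i ≠ j → ¬ G.Adj i j → dist (c i) (c j) = dn := by
    intro i j hij ha
    rw [← Real.sqrt_sq dist_nonneg, hdnon i j hij ha, hdn]
  have hdist_lt : ∀ i j : V, (i = j ∨ G.Adj i j) → dist (c i) (c j) < dn := by
    intro i j h
    rcases h with h | h
    · subst h; simpa using hdnpos
    · have h2 : dist (c i) (c j) ^ 2 < dn ^ 2 := by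
        rw [hdadj i j h, hdnsq]; exact hEaEn
      exact lt_of_pow_lt_pow_left₀ 2 hdnpos.le h2
  have hdist_le : ∀ i j : V, dist (c i) (c j) ≤ dn := by
    intro i j
    by_cases hij : i = j
    · exact (hdist_lt i j (Or.inl hij)).le
    by_cases ha : G.Adj i j
    · exact (hdist_lt i j (Or.inr ha)).le
    · exact (hdist_non i j hij ha).le
  have hbounded : Bornology.IsBounded (Set.range c) :=
    (Set.finite_range c).isBounded
  have hdiam_full : Metric.diam (Set.range c) = dn := by
    apply le_antisymm
    · apply Metric.diam_le_of_forall_dist_le hdnpos.le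
      rintro x ⟨i, rfl⟩ y ⟨j, rfl⟩
      exact hdist_le i j
    · obtain ⟨i0, j0, hij0, hna0⟩ := hnonadj
      rw [← hdist_non i0 j0 hij0 hna0]
      exact Metric.dist_le_diam_of_mem hbounded ⟨i0, rfl⟩ ⟨j0, rfl⟩
  rw [hdiam_full]
  constructor
  · intro hlt
    intro x hx y hy hxy
    by_contra ha
    have h1 : dn ≤ Metric.diam (c '' W) := by
      rw [← hdist_non x y hxy ha]
      exact Metric.dist_le_diam_of_mem
        (hbounded.subset (Set.image_subset_range c W)) ⟨x, hx, rfl⟩ ⟨y, hy, rfl⟩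
    exact absurd hlt (not_lt.mpr h1)
  · intro hclique
    have hda : ∀ i j : V, i ∈ W → j ∈ W → dist (c i) (c j) ≤ Real.sqrt Ea := by
      intro i j hi hj
      by_cases hij : i = j
      · subst hij; simp [Real.sqrt_nonneg]
      · have ha : G.Adj i j := hclique hi hj hij
        rw [← Real.sqrt_sq dist_nonneg, hdadj i j ha]
    have h1 : Metric.diam (c '' W) ≤ Real.sqrt Ea := by
      apply Metric.diam_le_of_forall_dist_le (Real.sqrt_nonneg _)
      rintro x ⟨i, hi, rfl⟩ y ⟨j, hj, rfl⟩
      exact hda i j hi hj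
    have h2 : Real.sqrt Ea < dn := by
      rcases le_or_gt 0 Ea with h | h
      · exact Real.sqrt_lt_sqrt h hEaEn
      · rw [Real.sqrt_eq_zero_of_nonpos h.le]
        exact hdnpos
    exact lt_of_le_of_lt h1 h2
end

section
/- Assume Γ has at least one pair of distinct non-adjacent vertices, λ − μ − 2s > 0, and s < −1. Then for every natural number x, the point set P(V) can be written as a union of x subsets each of diameter strictly smaller than the diameter of P(V) if and only if V can be written as a union of x cliques of Γ. -/
open scoped RealInnerProductSpace

theorem stmt_6 {V : Type*} [Fintype V] [DecidableEq V]
    (G : SimpleGraph V) [DecidableRel G.Adj] (v k l m : ℕ)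
    (hG : G.IsSRGWith v k l m)
    (hnonadj : ∃ i j : V, i ≠ j ∧ ¬G.Adj i j)
    (s : ℝ) (hsl : (l : ℝ) - m - 2 * s > 0) (hs : s < -1) (x : ℕ) :
    (∃ F : Fin x → Set (EuclideanSpace ℝ V),
        Set.range (srgCol G s) = ⋃ a, F a ∧
        ∀ a, Metric.diam (F a) < Metric.diam (Set.range (srgCol G s))) ↔
      (∃ Q : Fin x → Set V,
        (Set.univ : Set V) = ⋃ a, Q a ∧ ∀ a, G.IsClique (Q a)) := by
  classical
  set A := G.adjMatrix ℝ with hA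
  set y := A - s • (1 : Matrix V V ℝ) with hy
  set e := srgCol G s with he
  have hecoord : ∀ i t, e i t = y t i := fun i t => rfl
  have hsym : ∀ a b, y a b = y b a := by
    intro a b
    simp only [hy, hA, Matrix.sub_apply, Matrix.smul_apply, Matrix.one_apply,
      SimpleGraph.adjMatrix_apply, smul_eq_mul, mul_ite, mul_one, mul_zero]
    rw [if_congr (G.adj_comm a b) rfl rfl, if_congr eq_comm rfl rfl]
  -- entries of y * y
  have hB : ∀ i j, (y * y) i j =
      if i = j then (k : ℝ) + s ^ 2 else if G.Adj i j then (l : ℝ) - 2 * s else (m : ℝ) := by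
    have hmul : y * y = A * A - s • A - s • A + (s * s) • 1 := by
      rw [hy, sub_mul, mul_sub, mul_sub, Matrix.smul_mul, Matrix.mul_smul, Matrix.smul_mul,
        Matrix.mul_smul]
      simp [smul_smul]
      abel
    have hA2 : A * A = k • (1 : Matrix V V ℝ) + l • A + m • Gᶜ.adjMatrix ℝ := by
      rw [← pow_two]; exact hG.matrix_eq
    intro i j
    rw [hmul, hA2]
    simp only [Matrix.add_apply, Matrix.sub_apply, Matrix.smul_apply]
    by_cases hij : i = j
    · subst hij
      have hncc : ¬Gᶜ.Adj i i := by simp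
      simp only [hA, Matrix.one_apply, SimpleGraph.adjMatrix_apply, smul_eq_mul, nsmul_eq_mul,
        if_pos rfl, if_neg hncc, if_neg (G.irrefl (v := i)), if_true]
      ring
    · by_cases hadj : G.Adj i j
      · have hnc : ¬Gᶜ.Adj i j := by simp [SimpleGraph.compl_adj, hadj]
        simp only [Matrix.one_apply, SimpleGraph.adjMatrix_apply, smul_eq_mul, nsmul_eq_mul,
          hA, if_neg hij, if_pos hadj, if_neg hnc]
        ring
      · have hnc : Gᶜ.Adj i j := by simp [SimpleGraph.compl_adj, hij, hadj]
        simp only [Matrix.one_apply, SimpleGraph.adjMatrix_apply, smul_eq_mul, nsmul_eq_mul,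
          hA, if_neg hij, if_neg hadj, if_pos hnc]
        ring
  -- squared distances
  have hdist2 : ∀ i j, dist (e i) (e j) ^ 2 = (y * y) i i + (y * y) j j - 2 * (y * y) i j := by
    intro i j
    rw [EuclideanSpace.dist_eq, Real.sq_sqrt (by positivity)]
    have h1 : ∀ t, dist (e i t) (e j t) ^ 2
        = y i t * y t i + y j t * y t j - 2 * (y i t * y t j) := by
      intro t
      rw [Real.dist_eq, sq_abs, hecoord, hecoord, hsym i t, hsym j t]
      ring
    simp_rw [h1, Finset.sum_sub_distrib, Finset.sum_add_distrib, ← Finset.mul_sum,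
      ← Matrix.mul_apply]
  set da2 : ℝ := 2 * ((k : ℝ) + s ^ 2 - l + 2 * s) with hda2
  set dn2 : ℝ := 2 * ((k : ℝ) + s ^ 2 - m) with hdn2
  have hda : ∀ i j, G.Adj i j → dist (e i) (e j) ^ 2 = da2 := by
    intro i j h
    rw [hdist2, hB, hB, hB]
    simp [h, G.ne_of_adj h]
    ring
  have hdn : ∀ i j, i ≠ j → ¬G.Adj i j → dist (e i) (e j) ^ 2 = dn2 := by
    intro i j hij h
    rw [hdist2, hB, hB, hB]
    simp [h, hij]
    ring
  -- m ≤ k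
  have hmk : (m : ℝ) ≤ (k : ℝ) := by
    obtain ⟨i0, j0, hij0, hn0⟩ := hnonadj
    have h1 : Fintype.card (G.commonNeighbors i0 j0) = m := hG.of_not_adj hij0 hn0
    have h2 := SimpleGraph.card_commonNeighbors_le_degree_left G i0 j0
    have h3 := hG.regular i0
    exact_mod_cast h1 ▸ h3 ▸ h2
  have hs2 : 1 < s ^ 2 := by nlinarith
  have hdn_pos : 0 < dn2 := by rw [hdn2]; nlinarith
  have hlt : da2 < dn2 := by rw [hda2, hdn2]; nlinarith
  set D := Real.sqrt dn2 with hD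
  have hD_pos : 0 < D := Real.sqrt_pos.2 hdn_pos
  have hdistn : ∀ i j, i ≠ j → ¬G.Adj i j → dist (e i) (e j) = D := by
    intro i j hij h
    rw [hD, ← hdn i j hij h, Real.sqrt_sq dist_nonneg]
  have hsqrt_lt : Real.sqrt da2 < D := by
    rcases le_or_gt 0 da2 with h | h
    · exact Real.sqrt_lt_sqrt h hlt
    · rw [Real.sqrt_eq_zero_of_nonpos h.le]; exact hD_pos
  have hdista : ∀ i j, G.Adj i j → dist (e i) (e j) = Real.sqrt da2 := by
    intro i j h
    rw [← hda i j h, Real.sqrt_sq dist_nonneg]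
  have hdist_le : ∀ i j : V, dist (e i) (e j) ≤ D := by
    intro i j
    by_cases hij : i = j
    · subst hij; simp [hD_pos.le]
    by_cases hadj : G.Adj i j
    · rw [hdista i j hadj]; exact hsqrt_lt.le
    · exact (hdistn i j hij hadj).le
  have hbound : Bornology.IsBounded (Set.range e) := (Set.finite_range e).isBounded
  have hdiam : Metric.diam (Set.range e) = D := by
    apply le_antisymm
    · apply Metric.diam_le_of_forall_dist_le hD_pos.le
      rintro _ ⟨i, rfl⟩ _ ⟨j, rfl⟩
      exact hdist_le i j
    · obtain ⟨i, j, hij, hnadj⟩ := hnonadj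
      rw [← hdistn i j hij hnadj]
      exact Metric.dist_le_diam_of_mem hbound ⟨i, rfl⟩ ⟨j, rfl⟩
  constructor
  · rintro ⟨F, hcover, hlt'⟩
    refine ⟨fun a => e ⁻¹' F a, ?_, ?_⟩
    · ext i
      simp only [Set.mem_univ, Set.mem_iUnion, Set.mem_preimage, true_iff]
      have hmem : e i ∈ ⋃ a, F a := hcover ▸ Set.mem_range_self i
      exact Set.mem_iUnion.1 hmem
    · intro a
      rw [SimpleGraph.isClique_iff]
      intro i hi j hj hij
      by_contra hadj
      have h1 : dist (e i) (e j) = D := hdistn i j hij hadj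
      have hFa : F a ⊆ Set.range e := hcover ▸ Set.subset_iUnion F a
      have h2 : dist (e i) (e j) ≤ Metric.diam (F a) :=
        Metric.dist_le_diam_of_mem (hbound.subset hFa) hi hj
      have h3 := hlt' a
      rw [hdiam] at h3
      linarith [h1 ▸ h2]
  · rintro ⟨Q, hQcov, hQcl⟩
    refine ⟨fun a => e '' Q a, ?_, ?_⟩
    · rw [← Set.image_univ, hQcov, Set.image_iUnion]
    · intro a
      rw [hdiam]
      refine lt_of_le_of_lt (Metric.diam_le_of_forall_dist_le (Real.sqrt_nonneg _) ?_) hsqrt_lt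
      rintro _ ⟨i, hi, rfl⟩ _ ⟨j, hj, rfl⟩
      by_cases hij : i = j
      · subst hij; simp [Real.sqrt_nonneg]
      · have hadj : G.Adj i j := hQcl a hi hj hij
        rw [hdista i j hadj]
end

section
/- Assume λ − μ − 2s > 0 and s < −1. Let W ⊆ V contain at least one pair of distinct non-adjacent vertices, let c and p be natural numbers such that every clique of Γ contained in W has at most c vertices and p·c < |W|. Then P(W) cannot be written as a union of p subsets each of diameter strictly smaller than the diameter of P(W). -/
/-!
The vector `y_i` has squared norm `k + s²` and `⟪y_i, y_j⟫` equals `λ - 2s` or `μ` according as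
`i ~ j` or not, because `y² = (k + s²) I + (λ - 2s) A + μ (J - I - A)`. Hence
`‖y_i - y_j‖² = 2(k + s²) - 2(λ - 2s)` for adjacent and `2(k + s²) - 2μ` for non-adjacent `i ≠ j`,
and `λ - μ - 2s > 0` makes the second value the larger one: non-adjacent pairs realise the largest
possible distance. A piece of strictly smaller diameter therefore comes from a clique of `W`, so
`p` pieces cover at most `p·c` vertices.
-/

open scoped RealInnerProductSpace

theorem Set.ncard_le_card_mul_of_subset_iUnion {α ι : Type*} [Fintype ι] {W : Set α}
    {T : ι → Set α} (hW : W ⊆ ⋃ a, T a) {c : ℕ} (hc : ∀ a, (W ∩ T a).ncard ≤ c) :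
    W.ncard ≤ Fintype.card ι * c := by
  have hWeq : W = ⋃ a, W ∩ T a := by rw [← Set.inter_iUnion, Set.inter_eq_left.mpr hW]
  calc W.ncard = (⋃ a, W ∩ T a).ncard := by rw [← hWeq]
    _ ≤ ∑ a, (W ∩ T a).ncard := Set.ncard_iUnion_le_of_fintype _
    _ ≤ ∑ _a : ι, c := Finset.sum_le_sum fun a _ => hc a
    _ = Fintype.card ι * c := by simp

theorem isClique_inter_preimage_of_diam_lt {V E : Type*} [PseudoMetricSpace E]
    (G : SimpleGraph V) (f : V → E) {W : Set V} {D : ℝ}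
    (hfar : ∀ i ∈ W, ∀ j ∈ W, i ≠ j → ¬G.Adj i j → D ≤ dist (f i) (f j))
    (hdiam : Metric.diam (f '' W) ≤ D) {S : Set E} (hS : Bornology.IsBounded S)
    (hSdiam : Metric.diam S < Metric.diam (f '' W)) : G.IsClique (W ∩ f ⁻¹' S) := by
  intro i hi j hj hij
  by_contra hnadj
  have := Metric.dist_le_diam_of_mem hS hi.2 hj.2
  linarith [hfar i hi.1 j hj.1 hij hnadj]

section StronglyRegular

variable {V : Type*} [Fintype V] [DecidableEq V] {G : SimpleGraph V} [DecidableRel G.Adj]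
  {v k l m : ℕ}

theorem SimpleGraph.IsSRGWith.adjMatrix_sub_smul_one_mul_self (hG : G.IsSRGWith v k l m)
    (s : ℝ) :
    (G.adjMatrix ℝ - s • 1) * (G.adjMatrix ℝ - s • 1) =
      ((k : ℝ) + s ^ 2) • 1 + ((l : ℝ) - 2 * s) • G.adjMatrix ℝ + (m : ℝ) • Gᶜ.adjMatrix ℝ := by
  have hsq : G.adjMatrix ℝ * G.adjMatrix ℝ =
      (k : ℝ) • 1 + (l : ℝ) • G.adjMatrix ℝ + (m : ℝ) • Gᶜ.adjMatrix ℝ := by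
    simpa only [sq, ← Nat.cast_smul_eq_nsmul ℝ] using hG.matrix_eq (α := ℝ)
  rw [sub_mul, mul_sub, mul_sub, hsq]
  simp only [Matrix.smul_mul, Matrix.mul_smul, Matrix.one_mul, Matrix.mul_one, smul_smul]
  module

theorem inner_srgCol (s : ℝ) (i j : V) :
    ⟪srgCol G s i, srgCol G s j⟫ = ((G.adjMatrix ℝ - s • 1) * (G.adjMatrix ℝ - s • 1)) i j := by
  have hy : (G.adjMatrix ℝ - s • 1).IsSymm := G.isSymm_adjMatrix.sub (Matrix.isSymm_one.smul s)
  simp only [srgCol, PiLp.inner_apply, Matrix.mul_apply]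
  refine Finset.sum_congr rfl fun t _ => ?_
  rw [← hy.apply i t]
  exact Real.inner_apply _ _

theorem dist_srgCol_sq (hG : G.IsSRGWith v k l m) (s : ℝ) {i j : V} (hij : i ≠ j) :
    dist (srgCol G s i) (srgCol G s j) ^ 2 =
      2 * ((k : ℝ) + s ^ 2) - 2 * (if G.Adj i j then (l : ℝ) - 2 * s else m) := by
  rw [dist_eq_norm, norm_sub_sq_real, ← real_inner_self_eq_norm_sq,
    ← real_inner_self_eq_norm_sq, inner_srgCol, inner_srgCol, inner_srgCol,
    hG.adjMatrix_sub_smul_one_mul_self]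
  by_cases hadj : G.Adj i j <;>
    simp only [Matrix.add_apply, Matrix.smul_apply, Matrix.one_apply_eq, Matrix.one_apply_ne hij,
      SimpleGraph.adjMatrix_apply, SimpleGraph.compl_adj, SimpleGraph.irrefl, hij, hadj, ne_eq,
      not_false_eq_true, not_true_eq_false, and_false, and_self, ↓reduceIte, smul_eq_mul, mul_one,
      mul_zero, add_zero, zero_add] <;> ring

theorem dist_srgCol_of_not_adj (hG : G.IsSRGWith v k l m) (s : ℝ) {i j : V} (hij : i ≠ j)
    (hnadj : ¬G.Adj i j) :
    dist (srgCol G s i) (srgCol G s j) = √(2 * ((k : ℝ) + s ^ 2) - 2 * m) := by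
  have h := dist_srgCol_sq hG s hij
  rw [if_neg hnadj] at h
  rw [← h, Real.sqrt_sq dist_nonneg]

theorem dist_srgCol_le (hG : G.IsSRGWith v k l m) {s : ℝ} (hs : (m : ℝ) ≤ l - 2 * s) (i j : V) :
    dist (srgCol G s i) (srgCol G s j) ≤ √(2 * ((k : ℝ) + s ^ 2) - 2 * m) := by
  rcases eq_or_ne i j with rfl | hij
  · simp
  refine Real.le_sqrt_of_sq_le ?_
  rw [dist_srgCol_sq hG s hij]
  split_ifs <;> linarith

end StronglyRegular

theorem stmt_7_general {V : Type*} [Fintype V] [DecidableEq V]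
    (G : SimpleGraph V) [DecidableRel G.Adj] (v k l m : ℕ)
    (hG : G.IsSRGWith v k l m)
    (s : ℝ) (hsl : (l : ℝ) - m - 2 * s > 0)
    (W : Set V)
    (c p : ℕ)
    (hc : ∀ t : Set V, t ⊆ W → G.IsClique t → t.ncard ≤ c)
    (hpc : p * c < W.ncard) :
    ¬∃ F : Fin p → Set (EuclideanSpace ℝ V),
        srgCol G s '' W = ⋃ a, F a ∧
        ∀ a, Metric.diam (F a) < Metric.diam (srgCol G s '' W) := by
  rintro ⟨F, hPW, hdiam⟩
  have hbdd : Bornology.IsBounded (srgCol G s '' W) := (W.toFinite.image _).isBounded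
  have hdiamW : Metric.diam (srgCol G s '' W) ≤ √(2 * ((k : ℝ) + s ^ 2) - 2 * m) :=
    Metric.diam_le_of_forall_dist_le (Real.sqrt_nonneg _) <| by
      rintro _ ⟨i, -, rfl⟩ _ ⟨j, -, rfl⟩
      exact dist_srgCol_le hG (by linarith) i j
  have hclique (a : Fin p) : G.IsClique (W ∩ srgCol G s ⁻¹' F a) :=
    isClique_inter_preimage_of_diam_lt G (srgCol G s)
      (fun i _ j _ hij hnadj => (dist_srgCol_of_not_adj hG s hij hnadj).ge) hdiamW
      (hbdd.subset (hPW ▸ Set.subset_iUnion F a)) (hdiam a)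
  have hcover : W ⊆ ⋃ a, srgCol G s ⁻¹' F a := by
    rw [← Set.preimage_iUnion, ← hPW]
    exact Set.subset_preimage_image _ _
  have hcard := Set.ncard_le_card_mul_of_subset_iUnion hcover
    fun a => hc _ Set.inter_subset_left (hclique a)
  rw [Fintype.card_fin] at hcard
  omega

theorem stmt_7 {V : Type*} [Fintype V] [DecidableEq V]
    (G : SimpleGraph V) [DecidableRel G.Adj] (v k l m : ℕ)
    (hG : G.IsSRGWith v k l m)
    (s : ℝ) (hsl : (l : ℝ) - m - 2 * s > 0) (hs : s < -1)
    (W : Set V)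
    (hWnonadj : ∃ i ∈ W, ∃ j ∈ W, i ≠ j ∧ ¬G.Adj i j)
    (c p : ℕ)
    (hc : ∀ t : Set V, t ⊆ W → G.IsClique t → t.ncard ≤ c)
    (hpc : p * c < W.ncard) :
    ¬∃ F : Fin p → Set (EuclideanSpace ℝ V),
        srgCol G s '' W = ⋃ a, F a ∧
        ∀ a, Metric.diam (F a) < Metric.diam (srgCol G s '' W) :=
  stmt_7_general G v k l m hG s hsl W c p hc hpc
end

section
/- Assume s < 0. Fix i ∈ V and let N̄ = {j ∈ V : j ≠ i and j is not adjacent to i} be the non-neighbourhood of i, and assume N̄ is nonempty. Then ⟨y_i, y_j⟩ = μ for every j ∈ N̄ while ⟨y_i, y_i⟩ = s² + k ≠ μ; consequently the affine dimension of P(N̄) is strictly smaller than the affine dimension of P(N̄ ∪ {i}). -/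
open scoped RealInnerProductSpace

/-- The affine dimension of a point set: the finrank of the direction of its affine span. -/
noncomputable def adim {V : Type*} [Fintype V] (X : Set (EuclideanSpace ℝ V)) : ℕ :=
  Module.finrank ℝ (affineSpan ℝ X).direction

/-!
Since `A - s•I` is symmetric, `⟪y_i, y_j⟫` is the `(i, j)` entry of `A² - 2sA + s²I`, i.e. the number
of common neighbours `μ` when `j` is a non-neighbour of `i`, and `k + s²` when `j = i`; as `μ ≤ k`
and `s ≠ 0` these differ. So the linear functional `⟪y_i, ·⟫` is constant on the affine span of
`P(N̄)` but takes another value at `y_i`: the point `y_i` lies outside that span and raises its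
dimension.
-/

theorem finrank_direction_affineSpan_lt_insert {k V P : Type*} [Field k] [AddCommGroup V]
    [Module k V] [AddTorsor V P] [FiniteDimensional k V] {X : Set P} {p : P}
    (f : P →ᵃ[k] k) {c : k} (hX : X.Nonempty) (hf : ∀ x ∈ X, f x = c) (hp : f p ≠ c) :
    Module.finrank k (affineSpan k X).direction <
      Module.finrank k (affineSpan k (insert p X)).direction := by
  have hlevel : affineSpan k X ≤ (affineSpan k {c}).comap f :=
    affineSpan_le.2 fun x hx => by simp [hf x hx]
  have hpX : p ∉ affineSpan k X := fun h => hp <| by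
    simpa [AffineSubspace.mem_comap] using hlevel h
  have hlt : affineSpan k X < affineSpan k (insert p X) :=
    SetLike.lt_iff_le_and_exists.2
      ⟨affineSpan_mono k (Set.subset_insert p X), p, mem_affineSpan k (Set.mem_insert p X), hpX⟩
  exact Submodule.finrank_lt_finrank_of_lt <|
    AffineSubspace.direction_lt_of_nonempty hlt (hX.mono (subset_affineSpan k X))

namespace SimpleGraph

variable {V : Type*} [Fintype V] {G : SimpleGraph V} [DecidableRel G.Adj]

theorem IsSRGWith.le_of_not_adj {v k l m : ℕ} (hG : G.IsSRGWith v k l m) {i j : V} (hne : i ≠ j)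
    (hadj : ¬G.Adj i j) : m ≤ k := by
  rw [← hG.of_not_adj hne hadj, ← hG.regular i, ← card_neighborSet_eq_degree]
  exact Set.card_le_card (G.commonNeighbors_subset_neighborSet_left i j)

variable (G) [DecidableEq V]

theorem adjMatrix_mul_self_apply {α : Type*} [Semiring α] (v w : V) :
    (G.adjMatrix α * G.adjMatrix α) v w = Fintype.card (G.commonNeighbors v w) := by
  rw [← sq, adjMatrix_pow_apply_eq_card_walk]
  exact congrArg _ (@Fintype.card_congr _ _ (G.fintypeSetWalkLength v w 2) _
    (G.walkLengthTwoEquivCommonNeighbors v w))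

variable (s : ℝ)

theorem inner_srgCol (i j : V) :
    ⟪srgCol G s i, srgCol G s j⟫ = (G.adjMatrix ℝ * G.adjMatrix ℝ) i j - 2 * s * G.adjMatrix ℝ i j
      + s ^ 2 * (1 : Matrix V V ℝ) i j := by
  set y := G.adjMatrix ℝ - s • (1 : Matrix V V ℝ)
  have hy : y.transpose = y := by simp [y, Matrix.transpose_sub, transpose_adjMatrix]
  calc ⟪srgCol G s i, srgCol G s j⟫ = (y.transpose * y) i j := by
        simp only [srgCol, PiLp.inner_apply, RCLike.inner_apply, conj_trivial,
          WithLp.equiv_symm_apply, Matrix.mul_apply, Matrix.transpose_apply, mul_comm]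
        rfl
    _ = _ := by
        rw [hy]
        simp only [y, sub_mul, mul_sub, Matrix.smul_mul, Matrix.mul_smul, Matrix.one_mul,
          Matrix.mul_one, Matrix.sub_apply, Matrix.smul_apply, smul_eq_mul, smul_smul]
        ring

theorem inner_srgCol_self (i : V) : ⟪srgCol G s i, srgCol G s i⟫ = s ^ 2 + G.degree i := by
  rw [inner_srgCol, adjMatrix_mul_self_apply_self]
  simp [add_comm]

theorem inner_srgCol_of_not_adj {i j : V} (hne : i ≠ j) (hadj : ¬G.Adj i j) :
    ⟪srgCol G s i, srgCol G s j⟫ = Fintype.card (G.commonNeighbors i j) := by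
  rw [inner_srgCol, adjMatrix_mul_self_apply]
  simp [hne, hadj]

end SimpleGraph

theorem stmt_8 {V : Type*} [Fintype V] [DecidableEq V]
    (G : SimpleGraph V) [DecidableRel G.Adj] (v k l m : ℕ)
    (hG : G.IsSRGWith v k l m)
    (s : ℝ) (hs : s < 0) (i : V)
    (N : Set V) (hN : N = {j : V | j ≠ i ∧ ¬G.Adj i j}) (hNne : N.Nonempty) :
    (∀ j ∈ N, ⟪srgCol G s i, srgCol G s j⟫ = (m : ℝ)) ∧
    ⟪srgCol G s i, srgCol G s i⟫ = s ^ 2 + (k : ℝ) ∧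
    s ^ 2 + (k : ℝ) ≠ (m : ℝ) ∧
    adim (srgCol G s '' N) < adim (srgCol G s '' (N ∪ {i})) := by
  subst hN
  have hnonadj : ∀ j ∈ {j : V | j ≠ i ∧ ¬G.Adj i j}, ⟪srgCol G s i, srgCol G s j⟫ = m :=
    fun j ⟨hji, hadj⟩ => by
      rw [G.inner_srgCol_of_not_adj s hji.symm hadj, hG.of_not_adj hji.symm hadj]
  have hself : ⟪srgCol G s i, srgCol G s i⟫ = s ^ 2 + k := by
    rw [G.inner_srgCol_self, hG.regular i]
  have hne : s ^ 2 + (k : ℝ) ≠ m := by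
    obtain ⟨j, hji, hadj⟩ := hNne
    have hmk : (m : ℝ) ≤ k := by exact_mod_cast hG.le_of_not_adj (Ne.symm hji) hadj
    nlinarith
  refine ⟨hnonadj, hself, hne, ?_⟩
  rw [adim, adim, Set.image_union, Set.image_singleton, Set.union_singleton]
  refine finrank_direction_affineSpan_lt_insert
    (innerSL ℝ (srgCol G s i)).toLinearMap.toAffineMap (c := m) (hNne.image _) ?_ ?_
  · rintro _ ⟨j, hj, rfl⟩
    exact hnonadj j hj
  · simpa only [LinearMap.coe_toAffineMap, ContinuousLinearMap.coe_coe, innerSL_apply_apply,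
      hself] using hne
end

section
/- Assume s < 0 and let p = 1_{B₁} − 1_{B₂} ∈ ℝ^V. Then for every i ∈ V: if i ∈ B₁ then ⟨p, y_i⟩ = n(i, B₁) − s > 0; if i ∈ B₂ then ⟨p, y_i⟩ = s − n(i, B₂) < 0; and if i ∈ B₃ ∪ C then ⟨p, y_i⟩ = 0. -/
open scoped RealInnerProductSpace

/-- `nN G i U` is the number of neighbours of `i` lying in `U`. -/
noncomputable def nN {V : Type*} (G : SimpleGraph V) (i : V) (U : Set V) : ℕ :=
  {j ∈ U | G.Adj i j}.ncard

/-! Pairing the indicator of a set `U` with the column `y_i` gives `n(i, U) - s·1_U(i)`. For `p`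
the absence of edges between the `B_g`, together with the balance condition on `C`, then kills
all but one term in each case. -/

theorem nN_eq_zero_of_forall_not_adj {V : Type*} (G : SimpleGraph V) {i : V} {U : Set V}
    (h : ∀ j ∈ U, ¬G.Adj i j) : nN G i U = 0 := by
  rw [nN, Set.eq_empty_of_forall_notMem (s := {j ∈ U | G.Adj i j}) fun j hj => h j hj.1 hj.2,
    Set.ncard_empty]

section

variable {V : Type*} [Fintype V] (G : SimpleGraph V) [DecidableRel G.Adj]

theorem nN_eq_sum_indicator_mul_adjMatrix (i : V) (U : Set V) :
    (nN G i U : ℝ) = ∑ j, U.indicator 1 j * G.adjMatrix ℝ j i := by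
  classical
  rw [nN, Set.ncard_eq_toFinset_card', Set.toFinset_ofPred, Finset.natCast_card_filter]
  refine Finset.sum_congr rfl fun j _ => ?_
  by_cases hj : j ∈ U <;> simp [hj, G.adj_comm]

theorem inner_indicator_srgCol [DecidableEq V] (s : ℝ) (i : V) (U : Set V) :
    ⟪WithLp.toLp 2 (U.indicator 1), srgCol G s i⟫ = nN G i U - s * U.indicator 1 i := by
  rw [nN_eq_sum_indicator_mul_adjMatrix]
  simp only [srgCol, PiLp.inner_apply, WithLp.equiv_symm_apply, RCLike.inner_apply, conj_trivial,
    Matrix.sub_apply, Matrix.smul_apply, Matrix.one_apply, smul_eq_mul]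
  simp [sub_mul, Finset.sum_sub_distrib, mul_comm]

theorem inner_indicator_sub_indicator_srgCol [DecidableEq V] (s : ℝ) (i : V) (U W : Set V) :
    ⟪WithLp.toLp 2 (U.indicator 1 - W.indicator 1), srgCol G s i⟫ =
      nN G i U - nN G i W - s * (U.indicator 1 i - W.indicator 1 i) := by
  rw [WithLp.toLp_sub, inner_sub_left, inner_indicator_srgCol, inner_indicator_srgCol]
  ring

end

theorem stmt_9_general {V : Type*} [Fintype V] [DecidableEq V]
    (G : SimpleGraph V) [DecidableRel G.Adj] (s : ℝ) (hs : s < 0)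
    (B₁ B₂ B₃ C : Set V)
    (hd₁₂ : Disjoint B₁ B₂) (hd₁₃ : Disjoint B₁ B₃) (hd₁C : Disjoint B₁ C)
    (hd₂₃ : Disjoint B₂ B₃) (hd₂C : Disjoint B₂ C)
    (hB₁₂ : ∀ i ∈ B₁, ∀ j ∈ B₂, ¬G.Adj i j)
    (hB₁₃ : ∀ i ∈ B₁, ∀ j ∈ B₃, ¬G.Adj i j)
    (hB₂₃ : ∀ i ∈ B₂, ∀ j ∈ B₃, ¬G.Adj i j)
    (hC : ∀ i ∈ C, nN G i B₁ = nN G i B₂ ∧ nN G i B₂ = nN G i B₃)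
    (p : EuclideanSpace ℝ V)
    (hp : p = (WithLp.equiv 2 (V → ℝ)).symm (B₁.indicator 1 - B₂.indicator 1))
    (i : V) :
    (i ∈ B₁ → ⟪p, srgCol G s i⟫ = (nN G i B₁ : ℝ) - s ∧ 0 < ⟪p, srgCol G s i⟫) ∧
    (i ∈ B₂ → ⟪p, srgCol G s i⟫ = s - (nN G i B₂ : ℝ) ∧ ⟪p, srgCol G s i⟫ < 0) ∧
    (i ∈ B₃ ∪ C → ⟪p, srgCol G s i⟫ = 0) := by
  have key := inner_indicator_sub_indicator_srgCol G s i B₁ B₂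
  rw [WithLp.equiv_symm_apply] at hp
  rw [← hp] at key
  refine ⟨fun hi => ?_, fun hi => ?_, ?_⟩
  · have hn₂ : nN G i B₂ = 0 := nN_eq_zero_of_forall_not_adj G (hB₁₂ i hi)
    rw [key, hn₂, Set.indicator_of_mem hi, Set.indicator_of_notMem (hd₁₂.notMem_of_mem_left hi)]
    simp only [Pi.one_apply, Nat.cast_zero]
    exact ⟨by ring, by linarith [(nN G i B₁).cast_nonneg (α := ℝ)]⟩
  · have hn₁ : nN G i B₁ = 0 :=
      nN_eq_zero_of_forall_not_adj G fun j hj hij => hB₁₂ j hj i hi hij.symm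
    rw [key, hn₁, Set.indicator_of_mem hi, Set.indicator_of_notMem (hd₁₂.notMem_of_mem_right hi)]
    simp only [Pi.one_apply, Nat.cast_zero]
    exact ⟨by ring, by linarith [(nN G i B₂).cast_nonneg (α := ℝ)]⟩
  · rintro (hi | hi)
    · have hn₁ : nN G i B₁ = 0 :=
        nN_eq_zero_of_forall_not_adj G fun j hj hij => hB₁₃ j hj i hi hij.symm
      have hn₂ : nN G i B₂ = 0 :=
        nN_eq_zero_of_forall_not_adj G fun j hj hij => hB₂₃ j hj i hi hij.symm
      rw [key, hn₁, hn₂, Set.indicator_of_notMem (hd₁₃.notMem_of_mem_right hi),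
        Set.indicator_of_notMem (hd₂₃.notMem_of_mem_right hi)]
      simp
    · rw [key, (hC i hi).1, Set.indicator_of_notMem (hd₁C.notMem_of_mem_right hi),
        Set.indicator_of_notMem (hd₂C.notMem_of_mem_right hi)]
      simp

theorem stmt_9 {V : Type*} [Fintype V] [DecidableEq V]
    (G : SimpleGraph V) [DecidableRel G.Adj] (v k l m : ℕ)
    (hG : G.IsSRGWith v k l m) (s : ℝ) (hs : s < 0)
    (B₁ B₂ B₃ C : Set V)
    (hcover : B₁ ∪ B₂ ∪ B₃ ∪ C = Set.univ)
    (hd₁₂ : Disjoint B₁ B₂) (hd₁₃ : Disjoint B₁ B₃) (hd₁C : Disjoint B₁ C)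
    (hd₂₃ : Disjoint B₂ B₃) (hd₂C : Disjoint B₂ C) (hd₃C : Disjoint B₃ C)
    (hB₁₂ : ∀ i ∈ B₁, ∀ j ∈ B₂, ¬G.Adj i j)
    (hB₁₃ : ∀ i ∈ B₁, ∀ j ∈ B₃, ¬G.Adj i j)
    (hB₂₃ : ∀ i ∈ B₂, ∀ j ∈ B₃, ¬G.Adj i j)
    (hC : ∀ i ∈ C, nN G i B₁ = nN G i B₂ ∧ nN G i B₂ = nN G i B₃)
    (p : EuclideanSpace ℝ V)
    (hp : p = (WithLp.equiv 2 (V → ℝ)).symm (B₁.indicator 1 - B₂.indicator 1))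
    (i : V) :
    (i ∈ B₁ → ⟪p, srgCol G s i⟫ = (nN G i B₁ : ℝ) - s ∧ 0 < ⟪p, srgCol G s i⟫) ∧
    (i ∈ B₂ → ⟪p, srgCol G s i⟫ = s - (nN G i B₂ : ℝ) ∧ ⟪p, srgCol G s i⟫ < 0) ∧
    (i ∈ B₃ ∪ C → ⟪p, srgCol G s i⟫ = 0) :=
  stmt_9_general G s hs B₁ B₂ B₃ C hd₁₂ hd₁₃ hd₁C hd₂₃ hd₂C hB₁₂ hB₁₃ hB₂₃ hC p hp i
end

section
/- Assume s < 0. Let W ⊆ V be such that B₃ ∩ W ≠ ∅ and C ∩ W ≠ ∅. Then the affine dimension of P(C ∩ W) is at most the affine dimension of P((B₃ ∪ C) ∩ W) minus one. -/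
open scoped RealInnerProductSpace

/-!
The linear functional `x ↦ ∑_{j ∈ B₁} x j - ∑_{j ∈ B₃} x j` vanishes on `y_i` for `i ∈ C`, since
both sums count the neighbours of `i` in the respective block and these counts agree. At a vertex
`b ∈ B₃` the first sum is `0` (no edges between `B₁` and `B₃`) and the second is the number of
neighbours of `b` in `B₃` minus `s`, which is positive as `s < 0`. So `y_b` lies outside the affine
span of `P(C ∩ W)`, which is then a proper affine subspace of the span of `P((B₃ ∪ C) ∩ W)`.
-/

open Module

section AffineDimension

variable {k V P : Type*} [DivisionRing k] [AddCommGroup V] [Module k V] [AddTorsor V P]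

theorem finrank_direction_affineSpan_lt_of_notMem [FiniteDimensional k V] {s t : Set P}
    (hst : s ⊆ t) (hs : s.Nonempty) {p : P} (hpt : p ∈ t) (hps : p ∉ affineSpan k s) :
    finrank k (affineSpan k s).direction < finrank k (affineSpan k t).direction :=
  Submodule.finrank_lt_finrank_of_lt <| AffineSubspace.direction_lt_of_nonempty
    ((AffineSubspace.lt_iff_le_and_exists _ _).2
      ⟨affineSpan_mono k hst, p, subset_affineSpan k t hpt, hps⟩)
    ((affineSpan_nonempty k).2 hs)

theorem notMem_affineSpan_of_linearMap {F : Type*} [AddCommGroup F] [Module k F]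
    (f : V →ₗ[k] F) {s : Set V} (hf : ∀ x ∈ s, f x = 0) {p : V} (hp : f p ≠ 0) :
    p ∉ affineSpan k s := fun hmem =>
  hp <| (affineSpan_le (Q := (LinearMap.ker f).toAffineSubspace)).2 hf hmem

end AffineDimension

namespace SimpleGraph

variable {V : Type*} [Fintype V]

noncomputable def blockSum (B : Set V) : EuclideanSpace ℝ V →ₗ[ℝ] ℝ :=
  ∑ j ∈ B.toFinite.toFinset, PiLp.projₗ 2 (fun _ : V => ℝ) j

theorem blockSum_apply (B : Set V) (x : EuclideanSpace ℝ V) :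
    blockSum B x = ∑ j ∈ B.toFinite.toFinset, x j := by
  simp [blockSum]

theorem nN_eq_zero (G : SimpleGraph V) {i : V} {U : Set V} (h : ∀ j ∈ U, ¬G.Adj i j) :
    nN G i U = 0 := by
  rw [nN, Set.ncard_eq_zero, Set.sep_eq_empty_iff_mem_false]
  exact h

variable [DecidableEq V] (G : SimpleGraph V) [DecidableRel G.Adj]

theorem srgCol_apply (s : ℝ) (i j : V) :
    srgCol G s i j = (if G.Adj i j then 1 else 0) - if j = i then s else 0 := by
  simp [srgCol, Matrix.one_apply, G.adj_comm]

open Classical in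
theorem blockSum_srgCol (s : ℝ) (i : V) (B : Set V) :
    blockSum B (srgCol G s i) = nN G i B - if i ∈ B then s else 0 := by
  rw [blockSum_apply, Finset.sum_congr rfl fun j _ => G.srgCol_apply s i j, Finset.sum_sub_distrib,
    Finset.sum_boole, Finset.sum_ite_eq', nN,
    Set.ncard_eq_toFinset_card _ (Set.toFinite _)]
  simp only [Set.Finite.mem_toFinset]
  congr 3
  ext j
  simp

end SimpleGraph

open SimpleGraph in
theorem stmt_12_general {V : Type*} [Fintype V] [DecidableEq V]
    (G : SimpleGraph V) [DecidableRel G.Adj] (s : ℝ) (hs : s < 0)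
    (B₁ B₂ B₃ C : Set V)
    (hd₁₃ : Disjoint B₁ B₃) (hd₁C : Disjoint B₁ C) (hd₃C : Disjoint B₃ C)
    (hB₁₃ : ∀ i ∈ B₁, ∀ j ∈ B₃, ¬G.Adj i j)
    (hC : ∀ i ∈ C, nN G i B₁ = nN G i B₂ ∧ nN G i B₂ = nN G i B₃)
    (W : Set V)
    (hW₁ : (B₃ ∩ W).Nonempty) (hW₂ : (C ∩ W).Nonempty) :
    adim (srgCol G s '' (C ∩ W)) + 1 ≤ adim (srgCol G s '' ((B₃ ∪ C) ∩ W)) := by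
  obtain ⟨b, hb₃, hbW⟩ := hW₁
  set f := blockSum B₁ - blockSum B₃
  have hf_C : ∀ x ∈ srgCol G s '' (C ∩ W), f x = 0 := by
    rintro _ ⟨i, ⟨hiC, -⟩, rfl⟩
    obtain ⟨h₁₂, h₂₃⟩ := hC i hiC
    simp [f, blockSum_srgCol, hd₁C.notMem_of_mem_right hiC, hd₃C.notMem_of_mem_right hiC,
      h₁₂, h₂₃]
  have hf_b : f (srgCol G s b) ≠ 0 := by
    have hb₁ : nN G b B₁ = 0 := G.nN_eq_zero fun j hj hbj => hB₁₃ j hj b hb₃ hbj.symm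
    have hf_b_eq : f (srgCol G s b) = s - nN G b B₃ := by
      simp [f, blockSum_srgCol, hd₁₃.notMem_of_mem_right hb₃, hb₃, hb₁]
    rw [hf_b_eq]
    linarith [(nN G b B₃).cast_nonneg (α := ℝ)]
  exact finrank_direction_affineSpan_lt_of_notMem
    (Set.image_mono (Set.inter_subset_inter_left _ Set.subset_union_right)) (hW₂.image _)
    ⟨b, ⟨Or.inl hb₃, hbW⟩, rfl⟩ (notMem_affineSpan_of_linearMap f hf_C hf_b)

theorem stmt_12 {V : Type*} [Fintype V] [DecidableEq V]
    (G : SimpleGraph V) [DecidableRel G.Adj] (v k l m : ℕ)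
    (hG : G.IsSRGWith v k l m) (s : ℝ) (hs : s < 0)
    (B₁ B₂ B₃ C : Set V)
    (hcover : B₁ ∪ B₂ ∪ B₃ ∪ C = Set.univ)
    (hd₁₂ : Disjoint B₁ B₂) (hd₁₃ : Disjoint B₁ B₃) (hd₁C : Disjoint B₁ C)
    (hd₂₃ : Disjoint B₂ B₃) (hd₂C : Disjoint B₂ C) (hd₃C : Disjoint B₃ C)
    (hB₁₂ : ∀ i ∈ B₁, ∀ j ∈ B₂, ¬G.Adj i j)
    (hB₁₃ : ∀ i ∈ B₁, ∀ j ∈ B₃, ¬G.Adj i j)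
    (hB₂₃ : ∀ i ∈ B₂, ∀ j ∈ B₃, ¬G.Adj i j)
    (hC : ∀ i ∈ C, nN G i B₁ = nN G i B₂ ∧ nN G i B₂ = nN G i B₃)
    (W : Set V)
    (hW₁ : (B₃ ∩ W).Nonempty) (hW₂ : (C ∩ W).Nonempty) :
    adim (srgCol G s '' (C ∩ W)) + 1 ≤ adim (srgCol G s '' ((B₃ ∪ C) ∩ W)) :=
  stmt_12_general G s hs B₁ B₂ B₃ C hd₁₃ hd₁C hd₃C hB₁₃ hC W hW₁ hW₂
end

section
/- Assume Γ has at least one edge and at least one pair of distinct non-adjacent vertices. Then s = (λ − μ − √((λ−μ)² + 4(k−μ)))/2 is an eigenvalue of the adjacency matrix A of Γ: there exists a nonzero vector x ∈ ℝ^V with A·x = s·x. -/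
theorem stmt_14 {V : Type*} [Fintype V] [DecidableEq V]
    (G : SimpleGraph V) [DecidableRel G.Adj] (v k l m : ℕ)
    (hG : G.IsSRGWith v k l m)
    (hedge : ∃ i j : V, G.Adj i j)
    (hnonadj : ∃ i j : V, i ≠ j ∧ ¬G.Adj i j)
    (s : ℝ)
    (hs : s = ((l : ℝ) - m - Real.sqrt (((l : ℝ) - m) ^ 2 + 4 * ((k : ℝ) - m))) / 2) :
    ∃ x : V → ℝ, x ≠ 0 ∧ Matrix.mulVec (G.adjMatrix ℝ) x = s • x := by
  classical
  set A : Matrix V V ℝ := G.adjMatrix ℝ with hA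
  set C : Matrix V V ℝ := Gᶜ.adjMatrix ℝ with hC
  set J : Matrix V V ℝ := Matrix.of (fun _ _ => (1 : ℝ)) with hJdef
  -- basic numeric facts
  have hmk : (m : ℝ) ≤ k := by
    obtain ⟨i, j, hij, hna⟩ := hnonadj
    have h1 : Fintype.card (G.commonNeighbors i j) = m := hG.of_not_adj hij hna
    have h2 : Fintype.card (G.commonNeighbors i j) ≤ G.degree i :=
      G.card_commonNeighbors_le_degree_left i j
    have h3 : G.degree i = k := hG.regular i
    exact_mod_cast h1 ▸ h3 ▸ h2
  have hD : (0:ℝ) ≤ ((l : ℝ) - m) ^ 2 + 4 * ((k : ℝ) - m) := by nlinarith [sq_nonneg ((l:ℝ) - m)]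
  set r : ℝ := (l : ℝ) - m - s with hr
  have hsum : s + r = (l : ℝ) - m := by rw [hr]; ring
  have hsqrt : Real.sqrt (((l : ℝ) - m) ^ 2 + 4 * ((k : ℝ) - m)) ^ 2
      = ((l : ℝ) - m) ^ 2 + 4 * ((k : ℝ) - m) := Real.sq_sqrt hD
  have hprod : s * r = (m : ℝ) - k := by
    rw [hr, hs]; nlinarith [hsqrt]
  have hs_nonpos : s ≤ 0 := by
    have h1 : ((l:ℝ) - m) ≤ Real.sqrt (((l : ℝ) - m) ^ 2 + 4 * ((k : ℝ) - m)) := by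
      calc ((l:ℝ) - m) ≤ |(l:ℝ) - m| := le_abs_self _
        _ = Real.sqrt (((l:ℝ) - m)^2) := (Real.sqrt_sq_eq_abs _).symm
        _ ≤ _ := Real.sqrt_le_sqrt (by nlinarith)
    rw [hs]; linarith
  -- matrix identities
  have hA2 : A * A = (k : ℝ) • (1 : Matrix V V ℝ) + (l : ℝ) • A + (m : ℝ) • C := by
    have := hG.matrix_eq (α := ℝ)
    rw [pow_two] at this
    rw [hA, hC, this]
    simp [Nat.cast_smul_eq_nsmul]
  have hJ : J = C + 1 + A := by
    ext i j
    by_cases hij : i = j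
    · subst hij; simp [hJdef, hC, hA]
    · simp [hJdef, hC, hA, Matrix.one_apply, hij, SimpleGraph.compl_adj]
      by_cases hadj : G.Adj i j <;> simp [hadj, hij]
  have hJA : J * A = (k : ℝ) • J := by
    ext i j
    rw [SimpleGraph.mul_adjMatrix_apply]
    simp only [hJdef, Matrix.smul_apply, Matrix.of_apply, smul_eq_mul, mul_one]
    rw [Finset.sum_const, SimpleGraph.card_neighborFinset_eq_degree, hG.regular j]
    simp
  have key : (A - s • 1) * (A - r • 1) = (m : ℝ) • J := by
    have expand : (A - s • 1) * (A - r • 1)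
        = A * A - (s + r) • A + (s * r) • (1 : Matrix V V ℝ) := by
      simp only [sub_mul, mul_sub, Matrix.smul_mul, Matrix.mul_smul, mul_one, one_mul,
        smul_smul, add_smul]
      module
    rw [expand, hA2, hsum, hprod, hJ]
    simp only [smul_add, sub_smul, smul_sub]
    abel
  set M : Matrix V V ℝ := (A - r • 1) * (A - (k : ℝ) • 1) with hM
  have key2 : (A - s • 1) * M = 0 := by
    rw [hM, ← mul_assoc, key, Matrix.smul_mul, mul_sub, hJA, Matrix.mul_smul, mul_one,
      sub_self, smul_zero]
  have hAM : A * M = s • M := by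
    have : (A - s • 1) * M = A * M - s • M := by
      rw [sub_mul, Matrix.smul_mul, one_mul]
    rw [this] at key2
    linear_combination (norm := abel) key2
  -- M entries
  have hMentry : ∀ i j : V, i ≠ j →
      M i j = ((m : ℝ) + s - k) * (A i j) + (m : ℝ) * (C i j) := by
    intro i j hij
    have hMalt : M = ((l : ℝ) - r - k) • A + (m : ℝ) • C + ((k : ℝ) + r * k) • 1 := by
      rw [hM]
      have expand : (A - r • 1) * (A - (k:ℝ) • 1)
          = A * A - (r + k) • A + (r * k) • (1 : Matrix V V ℝ) := by
        simp only [sub_mul, mul_sub, Matrix.smul_mul, Matrix.mul_smul, mul_one, one_mul,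
          smul_smul, add_smul]
        module
      rw [expand, hA2]
      simp only [add_smul, sub_smul]
      abel
    have hlr : (l : ℝ) - r - k = (m : ℝ) + s - k := by rw [hr]; ring
    rw [hMalt, hlr]
    simp [Matrix.one_apply, hij]
  -- M ≠ 0 : find a nonzero entry
  have hMne : ∃ i j : V, M i j ≠ 0 := by
    by_cases hm : m = 0
    · obtain ⟨i, j, hadj⟩ := hedge
      have hij : i ≠ j := G.ne_of_adj hadj
      refine ⟨i, j, ?_⟩
      rw [hMentry i j hij]
      have hAij : A i j = 1 := by simp [hA, hadj]
      have hCij : C i j = 0 := by simp [hC, SimpleGraph.compl_adj, hadj]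
      have hk1 : (1 : ℝ) ≤ k := by
        have h1 : 0 < G.degree i := by
          rw [SimpleGraph.degree_pos_iff_exists_adj]; exact ⟨j, hadj⟩
        have h3 : G.degree i = k := hG.regular i
        exact_mod_cast h3 ▸ h1
      rw [hAij, hCij, hm]
      push_cast
      intro h
      nlinarith
    · obtain ⟨i, j, hij, hna⟩ := hnonadj
      refine ⟨i, j, ?_⟩
      rw [hMentry i j hij]
      have hAij : A i j = 0 := by simp [hA, hna]
      have hCij : C i j = 1 := by simp [hC, SimpleGraph.compl_adj, hij, hna]
      rw [hAij, hCij]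
      simp only [mul_zero, mul_one, zero_add]
      exact_mod_cast hm
  obtain ⟨i, j, hMij⟩ := hMne
  refine ⟨fun i' => M i' j, ?_, ?_⟩
  · intro h
    exact hMij (congrFun h i)
  · have hcol : (fun i' => M i' j) = M.mulVec (Pi.single j 1) := by
      funext i'
      rw [Matrix.mulVec_single]; simp
    rw [hcol, Matrix.mulVec_mulVec, hAM, Matrix.smul_mulVec]
end
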